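/- arXiv:2509.03100 — 3 statements merged into one kernel-verified Lean document; each statement's English description precedes it below -/
import Mathlib

section
/- For integers n, m and any (z₁, z₂) ∈ S³ ⊂ ℂ², the 2×2 complex matrix A_{n,m}(z₁,z₂) with first row (f_n(z₁), -f_{-m}(z₂)) and second row (f_m(z₂), f_{-n}(z₁)) lies in SU(2). -/
/-- For an integer `k`, the map `f_k : ℂ → ℂ`, `f_k z = z^k / |z|^(k-1)` for `z ≠ 0`
and `f_k 0 = 0`. -/
noncomputable def fpow (k : ℤ) (z : ℂ) : ℂ :=
  if z = 0 then 0 else z ^ k / ((‖z‖ : ℂ)) ^ (k - 1)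

/-- The matrix `A_{n,m}(z₁,z₂)` with rows `(f_n z₁, -f_{-m} z₂)` and `(f_m z₂, f_{-n} z₁)`. -/
noncomputable def Amat (n m : ℤ) (z₁ z₂ : ℂ) : Matrix (Fin 2) (Fin 2) ℂ :=
  !![fpow n z₁, -fpow (-m) z₂; fpow m z₂, fpow (-n) z₁]

/-!
In polar form `f_k (r u) = r u^k` for `r > 0`, `|u| = 1`. Hence `|f_k z| = |z|` and, since
`ū = u⁻¹`, `f_{-k} z = conj (f_k z)`. So `A_{n,m}(z₁,z₂) = [[a, -b̄], [b, ā]]` with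
`|a|² + |b|² = |z₁|² + |z₂|² = 1`, which is the standard form of an element of `SU(2)`.
-/

open ComplexConjugate

theorem Matrix.mem_specialUnitaryGroup_fin_two {R : Type*} [CommRing R] [StarRing R]
    {a b : R} (h : a * star a + b * star b = 1) :
    !![a, -star b; b, star a] ∈ specialUnitaryGroup (Fin 2) R := by
  refine mem_specialUnitaryGroup_iff.mpr ⟨mem_unitaryGroup_iff.mpr ?_, ?_⟩
  · ext i j
    fin_cases i <;> fin_cases j <;>
      simp [mul_apply, star_eq_conjTranspose, mul_comm (star _)] <;> linear_combination h
  · rw [det_fin_two_of]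
    linear_combination h

theorem Complex.norm_div_norm_self {z : ℂ} (hz : z ≠ 0) : ‖z / ‖z‖‖ = 1 := by
  simp [hz]

theorem fpow_of_ne_zero (k : ℤ) {z : ℂ} (hz : z ≠ 0) :
    fpow k z = ‖z‖ * (z / ‖z‖) ^ k := by
  have hr : (‖z‖ : ℂ) ≠ 0 := by exact_mod_cast norm_ne_zero_iff.mpr hz
  rw [fpow, if_neg hz, div_zpow, zpow_sub₀ hr, zpow_one]
  field_simp

theorem norm_fpow (k : ℤ) (z : ℂ) : ‖fpow k z‖ = ‖z‖ := by
  rcases eq_or_ne z 0 with rfl | hz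
  · simp [fpow]
  · rw [fpow_of_ne_zero k hz, norm_mul, norm_zpow, Complex.norm_div_norm_self hz, one_zpow,
      mul_one, Complex.norm_real, norm_norm]

theorem fpow_neg (k : ℤ) (z : ℂ) : fpow (-k) z = conj (fpow k z) := by
  rcases eq_or_ne z 0 with rfl | hz
  · simp [fpow]
  · rw [fpow_of_ne_zero _ hz, fpow_of_ne_zero _ hz, zpow_neg, ← inv_zpow,
      Complex.inv_eq_conj (Complex.norm_div_norm_self hz)]
    simp

/-- For `(z₁,z₂) ∈ S³`, the matrix `A_{n,m}(z₁,z₂)` lies in `SU(2)`. -/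
theorem stmt1 (n m : ℤ) (z₁ z₂ : ℂ)
    (hS : ‖z₁‖ ^ 2 + ‖z₂‖ ^ 2 = 1) :
    Amat n m z₁ z₂ ∈ Matrix.specialUnitaryGroup (Fin 2) ℂ := by
  rw [Amat, fpow_neg, fpow_neg]
  apply Matrix.mem_specialUnitaryGroup_fin_two
  simp only [RCLike.star_def, Complex.mul_conj', norm_fpow]
  exact_mod_cast hS
end

section
/- For any integer l, the graded ring ℤ[x,y]/(x² - l·xy, y²) with deg x = deg y = 4 is isomorphic as a graded ring to ℤ[x,y]/(x², y²) if l is even, and to ℤ[x,y]/(x² - xy, y²) if l is odd. -/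
open MvPolynomial

/-- The ideal `(x² - l·xy, y²)` in `ℤ[x,y]`. -/
noncomputable def gkmIdeal (l : ℤ) : Ideal (MvPolynomial (Fin 2) ℤ) :=
  Ideal.span {X 0 ^ 2 - C l * (X 0 * X 1), X 1 ^ 2}

/-- The ring `ℤ[x,y]/(x² - l·xy, y²)`, graded with `deg x = deg y = 4`. -/
abbrev GKMRing (l : ℤ) := MvPolynomial (Fin 2) ℤ ⧸ gkmIdeal l

/-- The degree-4 part of `GKMRing l`: the span of the images of `x` and `y`. -/
noncomputable def deg4 (l : ℤ) : Submodule ℤ (GKMRing l) :=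
  Submodule.span ℤ {Ideal.Quotient.mk (gkmIdeal l) (X 0), Ideal.Quotient.mk (gkmIdeal l) (X 1)}

/-- A graded ring isomorphism `GKMRing l ≃ GKMRing l'`: a ring isomorphism preserving
the degree-4 parts (with `deg x = deg y = 4`, this forces preservation of all degrees). -/
def GKMGradedIso (l l' : ℤ) : Prop :=
  ∃ e : GKMRing l ≃+* GKMRing l',
    (∀ p ∈ deg4 l, e p ∈ deg4 l') ∧ (∀ p ∈ deg4 l', e.symm p ∈ deg4 l)

/-! The shear `x ↦ x + k·y, y ↦ y` is an automorphism of `ℤ[x,y]` preserving linear forms, and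
`(x + k·y)² - (l + 2k)·(x + k·y)·y ≡ x² - l·xy` modulo `y²`. So it identifies the two quotients as
graded rings, and only the parity of `l` matters. -/

section Shear

variable {R : Type*} [CommRing R]

noncomputable def shearAlgEquiv (k : R) : MvPolynomial (Fin 2) R ≃ₐ[R] MvPolynomial (Fin 2) R :=
  AlgEquiv.ofAlgHom (aeval ![X 0 + C k * X 1, X 1]) (aeval ![X 0 - C k * X 1, X 1])
    (by ext i; fin_cases i <;> simp) (by ext i; fin_cases i <;> simp)

@[simp]
lemma shearAlgEquiv_X_zero (k : R) : shearAlgEquiv k (X 0) = X 0 + C k * X 1 := by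
  simp [shearAlgEquiv]

@[simp]
lemma shearAlgEquiv_X_one (k : R) : shearAlgEquiv k (X 1) = X 1 := by
  simp [shearAlgEquiv]

lemma isHomogeneous_one_aeval {σ τ : Type*} {p : MvPolynomial σ R} (hp : p.IsHomogeneous 1)
    (g : σ → MvPolynomial τ R) (hg : ∀ i, (g i).IsHomogeneous 1) :
    (aeval g p).IsHomogeneous 1 := by
  simpa using hp.aeval g hg

lemma isHomogeneous_one_shearAlgEquiv {p : MvPolynomial (Fin 2) R} (hp : p.IsHomogeneous 1)
    (k : R) : (shearAlgEquiv k p).IsHomogeneous 1 := by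
  refine isHomogeneous_one_aeval hp _ fun i ↦ ?_
  fin_cases i
  · exact (isHomogeneous_X R 0).add (isHomogeneous_C_mul_X k 1)
  · exact isHomogeneous_X R 1

lemma isHomogeneous_one_shearAlgEquiv_symm {p : MvPolynomial (Fin 2) R}
    (hp : p.IsHomogeneous 1) (k : R) : ((shearAlgEquiv k).symm p).IsHomogeneous 1 := by
  refine isHomogeneous_one_aeval hp _ fun i ↦ ?_
  fin_cases i
  · exact (isHomogeneous_X R 0).sub (isHomogeneous_C_mul_X k 1)
  · exact isHomogeneous_X R 1

end Shear

lemma mem_deg4_iff {l : ℤ} {p : GKMRing l} :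
    p ∈ deg4 l ↔ ∃ q : MvPolynomial (Fin 2) ℤ, q.IsHomogeneous 1 ∧ Ideal.Quotient.mk _ q = p := by
  have deg4_eq_map : deg4 l =
      (homogeneousSubmodule (Fin 2) ℤ 1).map (Ideal.Quotient.mkₐ ℤ (gkmIdeal l)).toLinearMap := by
    rw [homogeneousSubmodule_one_eq_span_X, Submodule.map_span, deg4, ← Set.range_comp]
    congr 1
    ext
    simp [Fin.exists_fin_two, eq_comm]
  simp [deg4_eq_map, mem_homogeneousSubmodule]

lemma map_shearAlgEquiv_gkmIdeal (l k : ℤ) :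
    (gkmIdeal (l + 2 * k)).map (shearAlgEquiv k) = gkmIdeal l := by
  have h : shearAlgEquiv k (X 0 ^ 2 - C (l + 2 * k) * (X 0 * X 1))
      = X 0 ^ 2 - C l * (X 0 * X 1) + C (-(k ^ 2 + l * k)) * X 1 ^ 2 := by
    simp only [map_sub, map_mul, map_pow, shearAlgEquiv_X_zero, shearAlgEquiv_X_one,
      ← algebraMap_eq, AlgEquiv.commutes]
    simp only [algebraMap_eq, map_add, map_mul, map_neg, map_pow, map_ofNat]
    ring
  rw [gkmIdeal, gkmIdeal, Ideal.map_span, Set.image_pair, h, map_pow, shearAlgEquiv_X_one,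
    Ideal.span_pair_add_mul_right]

lemma gkmGradedIso_of_algEquiv {l l' : ℤ}
    (f : MvPolynomial (Fin 2) ℤ ≃ₐ[ℤ] MvPolynomial (Fin 2) ℤ)
    (hf : (gkmIdeal l).map f = gkmIdeal l')
    (hf₁ : ∀ p : MvPolynomial (Fin 2) ℤ, p.IsHomogeneous 1 → (f p).IsHomogeneous 1)
    (hf₂ : ∀ p : MvPolynomial (Fin 2) ℤ, p.IsHomogeneous 1 → (f.symm p).IsHomogeneous 1) :
    GKMGradedIso l l' := by
  refine ⟨Ideal.quotientEquiv _ _ f.toRingEquiv hf.symm, fun p hp ↦ ?_, fun p hp ↦ ?_⟩ <;>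
    obtain ⟨q, hq, rfl⟩ := mem_deg4_iff.1 hp
  · exact mem_deg4_iff.2 ⟨f q, hf₁ q hq, rfl⟩
  · exact mem_deg4_iff.2 ⟨f.symm q, hf₂ q hq, rfl⟩

lemma gkmGradedIso_add_two_mul (l k : ℤ) : GKMGradedIso (l + 2 * k) l :=
  gkmGradedIso_of_algEquiv (shearAlgEquiv k) (map_shearAlgEquiv_gkmIdeal l k)
    (fun _ hp ↦ isHomogeneous_one_shearAlgEquiv hp k)
    (fun _ hp ↦ isHomogeneous_one_shearAlgEquiv_symm hp k)

/-- `ℤ[x,y]/(x² - l·xy, y²)` is isomorphic as a graded ring to `ℤ[x,y]/(x², y²)`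
if `l` is even, and to `ℤ[x,y]/(x² - xy, y²)` if `l` is odd. -/
theorem stmt10 (l : ℤ) :
    (Even l → GKMGradedIso l 0) ∧ (Odd l → GKMGradedIso l 1) := by
  constructor
  · rintro ⟨m, rfl⟩
    simpa [two_mul] using gkmGradedIso_add_two_mul 0 m
  · rintro ⟨m, rfl⟩
    simpa [add_comm] using gkmGradedIso_add_two_mul 1 m
end

section
/- Define η on edges of a GKM graph (Γ, α) with chosen lift α̃ and connection ∇ by η(e) = -ε₂⋯ε_n, where e = e₁,…,e_n are the edges at i(e) and α̃(∇_e e_i) ≡ ε_i α̃(e_i) mod α̃(e). For the product-type 4-valent graph of type 'PA+-' (the type where the congruence along the (1,0)-edges holds with signs +,+ and along the (0,1)-edges with signs +,−), every vertical edge and every (1,0)-horizontal edge e has η(e) = -1, while every (0,1)-horizontal edge e has η(e) = +1. Consequently, the closed edge path consisting of one (1,0)-horizontal edge, one vertical edge on the right, one (0,1)-horizontal edge (traversed back), and one vertical edge on the left has η-product equal to -1, so the graph is not orientable. -/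
/-- `v ≡ 0 mod u` in `ℤ²`: `v` is an integer multiple of `u`. -/
def ModZero (v u : ℤ × ℤ) : Prop := ∃ m : ℤ, v = m • u


private lemma sgnL0 (s m : ℤ) (h : 1 - s * 1 = m * 0) : s = 1 := by omega

private lemma sgnL1 (b s m : ℤ) (hb : b ≠ 0) (hs : s = 1 ∨ s = -1)
    (h : b - s * b = m * 0) : s = 1 := by
  rcases hs with h' | h'
  · exact h'
  · exfalso; subst h'; omega

private lemma sgnL2 (a b s n : ℤ) (hb : b ≠ 0)
    (h1 : 1 - s * 1 = n * a) (h2 : 0 - s * 0 = n * b) : s = 1 := by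
  have hn : n = 0 := by
    rcases mul_eq_zero.1 (by linarith : n * b = 0) with h | h
    · exact h
    · exact absurd h hb
  subst hn; omega

private lemma sgnL2' (a b s n : ℤ) (ha : a ≠ 0)
    (h1 : 0 - s * 0 = n * a) (h2 : 1 - s * 1 = n * b) : s = 1 := by
  have hn : n = 0 := by
    rcases mul_eq_zero.1 (by linarith : n * a = 0) with h | h
    · exact h
    · exact absurd h ha
  subst hn; omega

private lemma sgnL3 (a b c d s n : ℤ) (hind' : a * d + b * c ≠ 0)
    (hs : s = 1 ∨ s = -1)
    (e1 : -c - s * -c = n * a) (e2 : d - s * d = n * b) : s = 1 := by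
  rcases hs with h' | h'
  · exact h'
  · exfalso; subst h'
    have key : 2 * (a * d + b * c) = 0 := by linear_combination a * e2 - b * e1
    exact hind' (by linarith)

private lemma sgnL3' (a b c d s n : ℤ) (hind : a * d - b * c ≠ 0)
    (hs : s = 1 ∨ s = -1)
    (e1 : c - s * c = n * a) (e2 : d - s * d = n * b) : s = 1 := by
  rcases hs with h' | h'
  · exact h'
  · exfalso; subst h'
    have key : 2 * (a * d - b * c) = 0 := by linear_combination a * e2 - b * e1
    exact hind (by linarith)

private lemma sgnL4 (c s p : ℤ) (hc : c ≠ 0) (hs : s = 1 ∨ s = -1)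
    (h : c - s * -c = p * 0) : s = -1 := by
  rcases hs with h' | h'
  · exfalso; subst h'; omega
  · exact h'

/-- Consider the product-type 4-valent GKM graph of type `PA+-` over the biangle:
base labels `(1,0), (0,1)`, vertical labels `(a,b), (c,d)` at the two left vertices
and `(a,b), (-c,d)` at the two right vertices (congruences along the `(1,0)`-edges
hold with signs `+,+` and along the `(0,1)`-edges with signs `+,-`), where
`a,b,c,d ≠ 0`, `ad - bc ≠ 0`, `ad + bc ≠ 0`.

For an edge `e`, `η(e) = -ε₂⋯ε_n` where `α̃(∇_e e_i) ≡ ε_i α̃(e_i) mod α̃(e)` for the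
other edges `e_i` at `i(e)`.  Below, `s₁,s₂,s₃` are the `ε`-signs of the transports
along a `(1,0)`-horizontal edge (of the edges labelled `(0,1)`, `(a,b)` and `(c,d)`,
the latter transported to `(-c,d)`); `t₁,t₂,t₃` those along a vertical edge at the
right fiber (with weight `(a,b)`, transporting `(1,0)`, `(0,1)`, `(-c,d)`);
`u₁,u₂,u₃` those along a `(0,1)`-horizontal edge traversed from right to left
(transporting `(1,0)`, `(a,b)`, and `(-c,d)` to `(c,d)`); and `w₁,w₂,w₃` those along
a vertical edge of the left fiber (with weight `(a,b)`, transporting `(1,0)`, `(0,1)`,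
`(c,d)`).

The conclusion: every vertical edge and every `(1,0)`-horizontal edge has `η = -1`,
every `(0,1)`-horizontal edge has `η = +1`, and the `η`-product over the closed edge
path consisting of a `(1,0)`-horizontal edge, a right vertical edge, a `(0,1)`-horizontal
edge (traversed back) and a left vertical edge equals `-1 ≠ 1`; hence the graph is
not orientable. -/
theorem stmt15 (a b c d : ℤ)
    (ha : a ≠ 0) (hb : b ≠ 0) (hc : c ≠ 0) (hd : d ≠ 0)
    (hind : a * d - b * c ≠ 0) (hind' : a * d + b * c ≠ 0)
    (s₁ s₂ s₃ t₁ t₂ t₃ u₁ u₂ u₃ w₁ w₂ w₃ : ℤ)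
    (hsgn : ∀ ε ∈ [s₁, s₂, s₃, t₁, t₂, t₃, u₁, u₂, u₃, w₁, w₂, w₃], ε = 1 ∨ ε = -1)
    -- transports along a `(1,0)`-horizontal edge, congruences mod `(1,0)`:
    (hs₁ : ModZero (((0, 1) : ℤ × ℤ) - s₁ • (0, 1)) (1, 0))
    (hs₂ : ModZero (((a, b) : ℤ × ℤ) - s₂ • (a, b)) (1, 0))
    (hs₃ : ModZero (((-c, d) : ℤ × ℤ) - s₃ • (c, d)) (1, 0))
    -- transports along a vertical edge of the right fiber, congruences mod `(a,b)`:
    (ht₁ : ModZero (((1, 0) : ℤ × ℤ) - t₁ • (1, 0)) (a, b))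
    (ht₂ : ModZero (((0, 1) : ℤ × ℤ) - t₂ • (0, 1)) (a, b))
    (ht₃ : ModZero (((-c, d) : ℤ × ℤ) - t₃ • (-c, d)) (a, b))
    -- transports along a `(0,1)`-horizontal edge (right to left), congruences mod `(0,1)`:
    (hu₁ : ModZero (((1, 0) : ℤ × ℤ) - u₁ • (1, 0)) (0, 1))
    (hu₂ : ModZero (((a, b) : ℤ × ℤ) - u₂ • (a, b)) (0, 1))
    (hu₃ : ModZero (((c, d) : ℤ × ℤ) - u₃ • (-c, d)) (0, 1))
    -- transports along a vertical edge of the left fiber, congruences mod `(a,b)`: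
    (hw₁ : ModZero (((1, 0) : ℤ × ℤ) - w₁ • (1, 0)) (a, b))
    (hw₂ : ModZero (((0, 1) : ℤ × ℤ) - w₂ • (0, 1)) (a, b))
    (hw₃ : ModZero (((c, d) : ℤ × ℤ) - w₃ • (c, d)) (a, b)) :
    -(s₁ * s₂ * s₃) = -1 ∧ -(t₁ * t₂ * t₃) = -1 ∧ -(u₁ * u₂ * u₃) = 1 ∧
      -(w₁ * w₂ * w₃) = -1 ∧
      (-(s₁ * s₂ * s₃)) * (-(t₁ * t₂ * t₃)) * (-(u₁ * u₂ * u₃)) * (-(w₁ * w₂ * w₃)) = -1 ∧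
      ((-1 : ℤ) ≠ 1) := by
  simp only [List.forall_mem_cons, List.forall_mem_nil, and_true] at hsgn
  obtain ⟨gs₁, gs₂, gs₃, gt₁, gt₂, gt₃, gu₁, gu₂, gu₃, gw₁, gw₂, gw₃, -⟩ := hsgn
  obtain ⟨m1, h1⟩ := hs₁
  obtain ⟨m2, h2⟩ := hs₂
  obtain ⟨m3, h3⟩ := hs₃
  obtain ⟨n1, k1⟩ := ht₁
  obtain ⟨n2, k2⟩ := ht₂
  obtain ⟨n3, k3⟩ := ht₃
  obtain ⟨p1, l1⟩ := hu₁
  obtain ⟨p2, l2⟩ := hu₂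
  obtain ⟨p3, l3⟩ := hu₃
  obtain ⟨q1, r1⟩ := hw₁
  obtain ⟨q2, r2⟩ := hw₂
  obtain ⟨q3, r3⟩ := hw₃
  simp only [Prod.ext_iff, Prod.smul_mk, Prod.mk_sub_mk, smul_eq_mul] at h1 h2 h3 k1 k2 k3 l1 l2 l3 r1 r2 r3
  have es₁ : s₁ = 1 := sgnL0 s₁ m1 h1.2
  have es₂ : s₂ = 1 := sgnL1 b s₂ m2 hb gs₂ h2.2
  have es₃ : s₃ = 1 := sgnL1 d s₃ m3 hd gs₃ h3.2
  have et₁ : t₁ = 1 := sgnL2 a b t₁ n1 hb k1.1 k1.2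
  have et₂ : t₂ = 1 := sgnL2' a b t₂ n2 ha k2.1 k2.2
  have et₃ : t₃ = 1 := sgnL3 a b c d t₃ n3 hind' gt₃ k3.1 k3.2
  have eu₁ : u₁ = 1 := sgnL0 u₁ p1 l1.1
  have eu₂ : u₂ = 1 := sgnL1 a u₂ p2 ha gu₂ l2.1
  have eu₃ : u₃ = -1 := sgnL4 c u₃ p3 hc gu₃ l3.1
  have ew₁ : w₁ = 1 := sgnL2 a b w₁ q1 hb r1.1 r1.2
  have ew₂ : w₂ = 1 := sgnL2' a b w₂ q2 ha r2.1 r2.2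
  have ew₃ : w₃ = 1 := sgnL3' a b c d w₃ q3 hind gw₃ r3.1 r3.2
  subst es₁ es₂ es₃ et₁ et₂ et₃ eu₁ eu₂ eu₃ ew₁ ew₂ ew₃
  norm_num
end
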